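/- arXiv:math/9412226 — 2 statements merged into one kernel-verified Lean document; each statement's English description precedes it below -/
import Mathlib

section
/- For all x with |x| ≤ 1 (or at least |x| < 1), (arcsin x)² = ∑_{n=0}^∞ 4^n·(n!)²/((n+1)·(2n+1)!) · x^{2n+2}. -/
/-!
Write `S(x) = ∑ aₙ x^{2n+2}` for the series on the right. Differentiating termwise,
`V = S' = ∑ (2n+2) aₙ x^{2n+1}`, and the recurrence `(2n+3)(2n+4) aₙ₊₁ = (2n+2)² aₙ` makes the
series telescope to the differential equation `(1 - x²) V' - x V = 2` with `V(0) = 0`.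
The integrating factor `√(1 - x²)` turns it into `(√(1 - x²) V)' = 2 / √(1 - x²)`, so
`V = 2 arcsin x / √(1 - x²) = ((arcsin x)²)'`; since both `S` and `(arcsin x)²` vanish at `0`,
they agree on `(-1, 1)`.
-/

open Real Set
open scoped Nat

theorem eqOn_of_hasDerivAt_eq {𝕜 G : Type*} [RCLike 𝕜] [NormedAddCommGroup G] [NormedSpace 𝕜 G]
    {f g : 𝕜 → G} {f' : 𝕜 → G} {s : Set 𝕜} (hs : IsOpen s) (hs' : IsPreconnected s)
    (hf : ∀ y ∈ s, HasDerivAt f (f' y) y) (hg : ∀ y ∈ s, HasDerivAt g (f' y) y)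
    {x₀ : 𝕜} (hx₀ : x₀ ∈ s) (hfg : f x₀ = g x₀) : EqOn f g s :=
  hs.eqOn_of_deriv_eq hs' (fun y hy => (hf y hy).differentiableAt.differentiableWithinAt)
    (fun y hy => (hg y hy).differentiableAt.differentiableWithinAt)
    (fun y hy => (hf y hy).deriv.trans (hg y hy).deriv.symm) hx₀ hfg

theorem summable_mul_pow_two_mul_add {c : ℕ → ℝ} {C : ℝ} (hc : ∀ n, |c n| ≤ C * (n + 1))
    (k : ℕ) {y : ℝ} (hy : |y| < 1) : Summable fun n => c n * y ^ (2 * n + k) := by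
  have hgeom : Summable fun n : ℕ => C * ((n + 1) * |y| ^ n) := by
    have h₁ := summable_pow_mul_geometric_of_norm_lt_one 1 (by simpa using hy : ‖|y|‖ < 1)
    have h₂ := summable_geometric_of_lt_one (abs_nonneg y) hy
    exact ((h₁.add h₂).mul_left C).congr fun n => by ring
  refine hgeom.of_norm_bounded fun n => ?_
  rw [norm_mul, norm_pow, Real.norm_eq_abs, Real.norm_eq_abs, ← mul_assoc]
  exact mul_le_mul (hc n) (pow_le_pow_of_le_one (abs_nonneg y) hy.le (by omega)) (by positivity)
    ((abs_nonneg _).trans (hc n))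

theorem hasDerivAt_tsum_mul_pow_two_mul_add {c : ℕ → ℝ} {C : ℝ} (hc : ∀ n, |c n| ≤ C) (k : ℕ)
    {x : ℝ} (hx : |x| < 1) :
    HasDerivAt (fun y => ∑' n, c n * y ^ (2 * n + k + 1))
      (∑' n, c n * (2 * n + k + 1) * x ^ (2 * n + k)) x := by
  obtain ⟨r, hxr, hr₁⟩ := exists_between hx
  have hr₀ : 0 ≤ r := (abs_nonneg x).trans hxr.le
  have hr : |r| < 1 := by rwa [abs_of_nonneg hr₀]
  have hC : 0 ≤ C := (abs_nonneg _).trans (hc 0)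
  have hu : Summable fun n : ℕ => C * (2 * n + k + 1) * r ^ (2 * n + k) :=
    summable_mul_pow_two_mul_add (C := C * (k + 2)) (fun n => by
      rw [abs_of_nonneg (by positivity)]
      nlinarith [mul_nonneg hC (mul_nonneg k.cast_nonneg n.cast_nonneg)]) k hr
  refine hasDerivAt_tsum_of_isPreconnected hu isOpen_Ioo isPreconnected_Ioo
    (g := fun n y => c n * y ^ (2 * n + k + 1))
    (g' := fun n y => c n * (2 * n + k + 1) * y ^ (2 * n + k)) (fun n y _ => ?_)
    (fun n y hy => ?_) (y₀ := 0) (by constructor <;> linarith [abs_nonneg x]) (by simp)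
    (abs_lt.mp hxr)
  · refine ((hasDerivAt_pow (2 * n + k + 1) y).const_mul (c n)).congr_deriv ?_
    rw [Nat.add_sub_cancel]
    push_cast
    ring
  · rw [norm_mul, norm_mul, norm_pow, Real.norm_eq_abs, Real.norm_eq_abs, Real.norm_eq_abs,
      abs_of_nonneg (by positivity : (0 : ℝ) ≤ 2 * n + k + 1)]
    gcongr
    · exact hc n
    · exact (abs_lt.mpr hy).le

noncomputable def arcsinSqCoeff (n : ℕ) : ℝ :=
  4 ^ n * (n ! : ℝ) ^ 2 / ((n + 1) * ((2 * n + 1)! : ℝ))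

theorem arcsinSqCoeff_zero : arcsinSqCoeff 0 = 1 := by
  simp [arcsinSqCoeff]

theorem arcsinSqCoeff_nonneg (n : ℕ) : 0 ≤ arcsinSqCoeff n := by
  unfold arcsinSqCoeff
  positivity

theorem arcsinSqCoeff_succ (n : ℕ) :
    (2 * n + 3) * (2 * n + 4) * arcsinSqCoeff (n + 1) = (2 * n + 2) ^ 2 * arcsinSqCoeff n := by
  simp only [arcsinSqCoeff, show 2 * (n + 1) + 1 = 2 * n + 1 + 1 + 1 by ring, Nat.factorial_succ]
  push_cast
  field_simp
  ring

theorem mul_arcsinSqCoeff_le_two (n : ℕ) : (2 * n + 2) * arcsinSqCoeff n ≤ 2 := by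
  induction n with
  | zero => simp [arcsinSqCoeff_zero]
  | succ n ih =>
    -- `(2n+4) aₙ₊₁ = (2n+2)/(2n+3) · (2n+2) aₙ`, so `(2n+2) aₙ` decreases from its value `2` at `0`.
    push_cast
    nlinarith [arcsinSqCoeff_succ n, arcsinSqCoeff_nonneg (n + 1), (n.cast_nonneg : (0 : ℝ) ≤ n)]

theorem abs_arcsinSqCoeff_mul_le_two (n : ℕ) : |arcsinSqCoeff n * (2 * n + 2)| ≤ 2 := by
  rw [abs_of_nonneg (mul_nonneg (arcsinSqCoeff_nonneg n) (by positivity)), mul_comm]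
  exact mul_arcsinSqCoeff_le_two n

theorem arcsinSqCoeff_le_one (n : ℕ) : arcsinSqCoeff n ≤ 1 := by
  nlinarith [mul_arcsinSqCoeff_le_two n, arcsinSqCoeff_nonneg n, (n.cast_nonneg : (0 : ℝ) ≤ n)]

theorem tsum_arcsinSqCoeff_ode {y : ℝ} (hy : |y| < 1) :
    (1 - y ^ 2) * ∑' n, arcsinSqCoeff n * (2 * n + 2) * (2 * n + 1) * y ^ (2 * n)
      - y * ∑' n, arcsinSqCoeff n * (2 * n + 2) * y ^ (2 * n + 1) = 2 := by
  set b : ℕ → ℝ := fun n => arcsinSqCoeff n * (2 * n + 2)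
  have hb : ∀ n, |b n| ≤ 2 * (n + 1) := fun n =>
    (abs_arcsinSqCoeff_mul_le_two n).trans (by linarith [(n.cast_nonneg : (0 : ℝ) ≤ n)])
  have hb' : ∀ n, |b n * (2 * n + 1)| ≤ 4 * (n + 1) := fun n => by
    rw [abs_mul, abs_of_nonneg (by positivity : (0 : ℝ) ≤ 2 * n + 1)]
    nlinarith [abs_arcsinSqCoeff_mul_le_two n, abs_nonneg (b n), (n.cast_nonneg : (0 : ℝ) ≤ n)]
  have hD : Summable fun n => b n * (2 * n + 1) * y ^ (2 * n) :=
    summable_mul_pow_two_mul_add hb' 0 hy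
  have hV : Summable fun n => b n * y ^ (2 * n + 1) := summable_mul_pow_two_mul_add hb 1 hy
  have hshift : ∑' n, b n * (2 * n + 1) * y ^ (2 * n)
      = 2 + ∑' n, b n * (2 * n + 2) * y ^ (2 * n + 2) := by
    rw [hD.tsum_eq_zero_add]
    congr 1
    · simp [b, arcsinSqCoeff_zero]
    · congr 1
      funext n
      simp only [b, show 2 * (n + 1) = 2 * n + 2 by ring]
      push_cast
      linear_combination y ^ (2 * n + 2) * arcsinSqCoeff_succ n
  have hsplit : y ^ 2 * ∑' n, b n * (2 * n + 1) * y ^ (2 * n)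
      + y * ∑' n, b n * y ^ (2 * n + 1) = ∑' n, b n * (2 * n + 2) * y ^ (2 * n + 2) := by
    rw [← tsum_mul_left, ← tsum_mul_left, ← (hD.mul_left _).tsum_add (hV.mul_left _)]
    congr 1
    funext n
    ring
  linear_combination hshift - hsplit

theorem sqrt_one_sub_sq_mul_eq_two_mul_arcsin {V V' : ℝ → ℝ}
    (hV : ∀ y ∈ Ioo (-1 : ℝ) 1, HasDerivAt V (V' y) y)
    (hode : ∀ y ∈ Ioo (-1 : ℝ) 1, (1 - y ^ 2) * V' y - y * V y = 2) (h₀ : V 0 = 0)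
    {x : ℝ} (hx : x ∈ Ioo (-1 : ℝ) 1) : √(1 - x ^ 2) * V x = 2 * arcsin x := by
  refine eqOn_of_hasDerivAt_eq (f := fun y => √(1 - y ^ 2) * V y) (g := fun y => 2 * arcsin y)
    (f' := fun y => 2 * (1 / √(1 - y ^ 2))) isOpen_Ioo isPreconnected_Ioo (fun y hy => ?_)
    (fun y hy => (hasDerivAt_arcsin hy.1.ne' hy.2.ne).const_mul 2) (x₀ := 0) (by simp)
    (by simp [h₀]) hx
  have hpos : 0 < 1 - y ^ 2 := by nlinarith [hy.1, hy.2]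
  have hsqrt : HasDerivAt (fun z => √(1 - z ^ 2)) (-(2 * y) / (2 * √(1 - y ^ 2))) y := by
    simpa using ((hasDerivAt_pow 2 y).const_sub 1).sqrt hpos.ne'
  refine (hsqrt.mul (hV y hy)).congr_deriv ?_
  have hs : √(1 - y ^ 2) ≠ 0 := (Real.sqrt_pos.mpr hpos).ne'
  field_simp
  linear_combination (hode y hy) + V' y * Real.sq_sqrt hpos.le

theorem tsum_arcsinSqCoeff_mul_pow_eq {x : ℝ} (hx : |x| < 1) :
    ∑' n, arcsinSqCoeff n * (2 * n + 2) * x ^ (2 * n + 1) = 2 * arcsin x / √(1 - x ^ 2) := by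
  have key := sqrt_one_sub_sq_mul_eq_two_mul_arcsin
    (V := fun y => ∑' n, arcsinSqCoeff n * (2 * n + 2) * y ^ (2 * n + 1))
    (V' := fun y => ∑' n, arcsinSqCoeff n * (2 * n + 2) * (2 * n + 1) * y ^ (2 * n))
    (fun y hy => by
      simpa using hasDerivAt_tsum_mul_pow_two_mul_add abs_arcsinSqCoeff_mul_le_two 0
        (abs_lt.mpr hy))
    (fun y hy => tsum_arcsinSqCoeff_ode (abs_lt.mpr hy)) (by simp) (abs_lt.mp hx)
  have hpos : 0 < 1 - x ^ 2 := by nlinarith [abs_lt.mp hx]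
  rw [eq_div_iff (Real.sqrt_pos.mpr hpos).ne', mul_comm]
  exact key

theorem stmt_7 (x : ℝ) (hx : |x| < 1) :
    (Real.arcsin x) ^ 2 = ∑' n : ℕ,
      4 ^ n * (Nat.factorial n : ℝ) ^ 2 /
        ((n + 1) * (Nat.factorial (2 * n + 1) : ℝ)) * x ^ (2 * n + 2) := by
  have hS : ∀ y ∈ Ioo (-1 : ℝ) 1, HasDerivAt (fun y => ∑' n, arcsinSqCoeff n * y ^ (2 * n + 2))
      (2 * arcsin y / √(1 - y ^ 2)) y := by
    intro y hy
    have h := hasDerivAt_tsum_mul_pow_two_mul_add (fun n => (abs_of_nonneg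
      (arcsinSqCoeff_nonneg n)).trans_le (arcsinSqCoeff_le_one n)) 1 (abs_lt.mpr hy)
    simp only [Nat.cast_one, add_assoc, one_add_one_eq_two] at h
    rwa [← tsum_arcsinSqCoeff_mul_pow_eq (abs_lt.mpr hy)]
  have hA : ∀ y ∈ Ioo (-1 : ℝ) 1, HasDerivAt (fun y => arcsin y ^ 2)
      (2 * arcsin y / √(1 - y ^ 2)) y := fun y hy =>
    ((hasDerivAt_arcsin hy.1.ne' hy.2.ne).pow 2).congr_deriv (by ring)
  exact eqOn_of_hasDerivAt_eq isOpen_Ioo isPreconnected_Ioo hA hS (x₀ := 0) (by simp) (by simp)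
    (abs_lt.mp hx)
end

section
/- Both sums u(n) = ∑_{k=0}^n C(n,k)³ and v(n) = ∑_{k=0}^n C(n,k)²·C(2k,n) satisfy the same recurrence (n+2)²·s(n+2) − (7n² + 21n + 16)·s(n+1) − 8(n+1)²·s(n) = 0, and hence, since u(0)=v(0)=1 and u(1)=v(1)=2, u(n) = v(n) for all n (Strehl's identity). -/
/-!
The Franel numbers `∑ C(n,k)^3` satisfy the recurrence by creative telescoping: the recurrence
operator applied to the summand equals `G(n,k+1) - G(n,k)` for Zeilberger's certificate `G`, a
rational multiple of `C(n+2,k)^3` vanishing at `k = 0` and `k = n+3`, so the sum over `k` is zero.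

Strehl's sum equals the Franel number: expanding
`C(2k,n) = ∑_{i+j=n} C(k,i) C(k,j)` by Vandermonde and exchanging the sums, each inner sum
`∑_k C(n,k)^2 C(k,i) C(k,j)` collapses, through `C(n,k) C(k,i) = C(n,i) C(n-i,k-i)` and
Vandermonde once more, to `C(n,i) C(n,j)^2`. Hence `u = v`, and `v` inherits the recurrence.
-/

open Finset

section CastChoose

variable {R : Type*} [CommRing R]

theorem Nat.cast_choose_mul_succ_eq (n k : ℕ) :
    (n.choose k : R) * (n + 1) = ((n + 1).choose k : R) * (n + 1 - k) := by
  rcases le_or_gt k (n + 1) with h | h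
  · have := congrArg (Nat.cast : ℕ → R) (Nat.choose_mul_succ_eq n k)
    push_cast [Nat.cast_sub h] at this
    exact this
  · simp [Nat.choose_eq_zero_of_lt h, Nat.choose_eq_zero_of_lt (by omega : n < k)]

theorem Nat.cast_choose_succ_right_eq (n k : ℕ) :
    (n.choose (k + 1) : R) * (k + 1) = (n.choose k : R) * (n - k) := by
  rcases le_or_gt k n with h | h
  · have := congrArg (Nat.cast : ℕ → R) (Nat.choose_succ_right_eq n k)
    push_cast [Nat.cast_sub h] at this
    exact this
  · simp [Nat.choose_eq_zero_of_lt h, Nat.choose_eq_zero_of_lt (by omega : n < k + 1)]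

end CastChoose

def franel (n : ℕ) : ℕ := ∑ k ∈ range (n + 1), n.choose k ^ 3

theorem franel_eq_sum_range {n m : ℕ} (h : n < m) :
    franel n = ∑ k ∈ range m, n.choose k ^ 3 :=
  sum_subset (range_subset_range.2 h) fun k _ hk => by
    simp [Nat.choose_eq_zero_of_lt (by simpa using hk : n < k)]

/-- Zeilberger's certificate for the Franel recurrence, found by creative telescoping. -/
def franelCertificate (n k : ℕ) : ℚ :=
  let N : ℚ := n
  let K : ℚ := k
  K ^ 3 * ((n + 2).choose k : ℚ) ^ 3 / ((N + 1) ^ 3 * (N + 2) ^ 3) *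
    (4 * (N + 1) ^ 2 * K ^ 3 - (30 + 78 * N + 66 * N ^ 2 + 18 * N ^ 3) * K ^ 2
      + (78 + 249 * N + 291 * N ^ 2 + 147 * N ^ 3 + 27 * N ^ 4) * K
      - (72 + 272 * N + 402 * N ^ 2 + 290 * N ^ 3 + 102 * N ^ 4 + 14 * N ^ 5))

theorem franel_summand_telescopes (n k : ℕ) :
    ((n : ℚ) + 2) ^ 2 * ((n + 2).choose k : ℚ) ^ 3
      - (7 * (n : ℚ) ^ 2 + 21 * n + 16) * ((n + 1).choose k : ℚ) ^ 3
      - 8 * ((n : ℚ) + 1) ^ 2 * (n.choose k : ℚ) ^ 3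
      = franelCertificate n (k + 1) - franelCertificate n k := by
  have hn1 : (n : ℚ) + 1 ≠ 0 := by positivity
  have hn2 : (n : ℚ) + 2 ≠ 0 := by positivity
  have hk1 : (k : ℚ) + 1 ≠ 0 := by positivity
  have e1 : ((n + 1).choose k : ℚ) = ((n + 2).choose k : ℚ) * (n + 2 - k) / (n + 2) := by
    rw [eq_div_iff hn2]
    have := Nat.cast_choose_mul_succ_eq (R := ℚ) (n + 1) k
    push_cast at this
    linear_combination this
  have e0 : (n.choose k : ℚ) = ((n + 1).choose k : ℚ) * (n + 1 - k) / (n + 1) := by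
    rw [eq_div_iff hn1, ← Nat.cast_choose_mul_succ_eq]
  have ek : ((n + 2).choose (k + 1) : ℚ) = ((n + 2).choose k : ℚ) * (n + 2 - k) / (k + 1) := by
    rw [eq_div_iff hk1, Nat.cast_choose_succ_right_eq]
    push_cast
    ring
  simp only [franelCertificate]
  rw [e0, e1, ek]
  push_cast
  field_simp
  ring

theorem franel_recurrence (n : ℕ) :
    (n + 2) ^ 2 * franel (n + 2)
      = (7 * n ^ 2 + 21 * n + 16) * franel (n + 1) + 8 * (n + 1) ^ 2 * franel n := by
  have telescoped : ∑ k ∈ range (n + 3),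
      (((n : ℚ) + 2) ^ 2 * ((n + 2).choose k : ℚ) ^ 3
        - (7 * (n : ℚ) ^ 2 + 21 * n + 16) * ((n + 1).choose k : ℚ) ^ 3
        - 8 * ((n : ℚ) + 1) ^ 2 * (n.choose k : ℚ) ^ 3) = 0 := by
    rw [sum_congr rfl fun k _ => franel_summand_telescopes n k, sum_range_sub]
    simp [franelCertificate]
  simp only [sum_sub_distrib, ← mul_sum] at telescoped
  qify
  rw [franel_eq_sum_range (by omega : n + 2 < n + 3),
    franel_eq_sum_range (by omega : n + 1 < n + 3), franel_eq_sum_range (by omega : n < n + 3)]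
  push_cast
  linear_combination telescoped

theorem sum_choose_sq_mul_choose_mul_choose (i j : ℕ) :
    ∑ k ∈ range (i + j + 1), (i + j).choose k ^ 2 * (k.choose i * k.choose j)
      = (i + j).choose i * (i + j).choose j ^ 2 := by
  have term_eq : ∀ m ≤ j, (i + j).choose (i + m) ^ 2 * ((i + m).choose i * (i + m).choose j)
      = (i + j).choose i * (i + j).choose j * (j.choose m * i.choose (j - m)) := by
    intro m hm
    have choose_mul_left :
        (i + j).choose (i + m) * (i + m).choose i = (i + j).choose i * j.choose m := by
      simpa using Nat.choose_mul (n := i + j) (Nat.le_add_right i m)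
    have choose_mul_right : (i + j).choose (i + m) * (i + m).choose j
        = (i + j).choose j * i.choose (j - m) := by
      rcases lt_or_ge (i + m) j with h | h
      · simp [Nat.choose_eq_zero_of_lt h, Nat.choose_eq_zero_of_lt (by omega : i < j - m)]
      · rw [Nat.choose_mul h, Nat.add_sub_cancel, ← Nat.choose_symm (by omega : i + m - j ≤ i),
          (by omega : i - (i + m - j) = j - m)]
    calc (i + j).choose (i + m) ^ 2 * ((i + m).choose i * (i + m).choose j)
        = ((i + j).choose (i + m) * (i + m).choose i)
            * ((i + j).choose (i + m) * (i + m).choose j) := by ring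
      _ = _ := by rw [choose_mul_left, choose_mul_right]; ring
  have vandermonde : ∑ m ∈ range (j + 1), j.choose m * i.choose (j - m) = (i + j).choose j := by
    rw [add_comm i j, Nat.add_choose_eq, Finset.Nat.sum_antidiagonal_eq_sum_range_succ_mk]
  rw [add_assoc, sum_range_add, sum_eq_zero fun k hk => by
      simp [Nat.choose_eq_zero_of_lt (mem_range.1 hk)],
    zero_add, sum_congr rfl fun m hm => term_eq m (by simpa [Nat.lt_succ_iff] using hm),
    ← mul_sum, vandermonde]
  ring

theorem sum_choose_sq_mul_choose_two_mul (n : ℕ) :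
    ∑ k ∈ range (n + 1), n.choose k ^ 2 * (2 * k).choose n = franel n := by
  calc ∑ k ∈ range (n + 1), n.choose k ^ 2 * (2 * k).choose n
      = ∑ ij ∈ antidiagonal n, ∑ k ∈ range (n + 1),
          n.choose k ^ 2 * (k.choose ij.1 * k.choose ij.2) := by
        rw [sum_comm]
        simp only [two_mul, Nat.add_choose_eq, mul_sum]
    _ = ∑ ij ∈ antidiagonal n, n.choose ij.1 * n.choose ij.2 ^ 2 := by
        refine sum_congr rfl fun ij hij => ?_
        rw [← mem_antidiagonal.1 hij]
        exact sum_choose_sq_mul_choose_mul_choose ij.1 ij.2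
    _ = franel n := by
        rw [Finset.Nat.sum_antidiagonal_eq_sum_range_succ_mk, franel]
        refine sum_congr rfl fun k hk => ?_
        rw [Nat.choose_symm (Nat.lt_succ_iff.1 (mem_range.1 hk))]
        ring

theorem stmt_12 (u v : ℕ → ℤ)
    (hu : ∀ n, u n = ∑ k ∈ Finset.range (n + 1), (Nat.choose n k : ℤ) ^ 3)
    (hv : ∀ n, v n = ∑ k ∈ Finset.range (n + 1),
      (Nat.choose n k : ℤ) ^ 2 * (Nat.choose (2 * k) n : ℤ)) :
    (∀ n : ℕ, ((n : ℤ) + 2) ^ 2 * u (n + 2)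
        - (7 * (n : ℤ) ^ 2 + 21 * n + 16) * u (n + 1) - 8 * ((n : ℤ) + 1) ^ 2 * u n = 0) ∧
    (∀ n : ℕ, ((n : ℤ) + 2) ^ 2 * v (n + 2)
        - (7 * (n : ℤ) ^ 2 + 21 * n + 16) * v (n + 1) - 8 * ((n : ℤ) + 1) ^ 2 * v n = 0) ∧
    (∀ n : ℕ, u n = v n) := by
  have hu_franel : ∀ n, u n = franel n := fun n => by
    rw [hu, franel]
    push_cast
    rfl
  have hv_franel : ∀ n, v n = franel n := fun n => by
    rw [hv, ← sum_choose_sq_mul_choose_two_mul]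
    push_cast
    rfl
  have recurrence (n : ℕ) : ((n : ℤ) + 2) ^ 2 * franel (n + 2)
      - (7 * (n : ℤ) ^ 2 + 21 * n + 16) * franel (n + 1)
      - 8 * ((n : ℤ) + 1) ^ 2 * franel n = 0 := by
    have := franel_recurrence n
    zify at this
    linear_combination this
  simp only [hu_franel, hv_franel, recurrence, implies_true, and_self]
end
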